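/- In the Clifford algebra Cl, define for each n ∈ ℤ the elements φ⁻(n) = −(n/√2)·(Φ_1(n−1/2) + √−1·Φ_2(n−1/2)) and φ⁺(n) = −√2·(n·Φ_1(n+1/2) + √−1·(n+1)·Φ_2(n+1/2)). Then for all m, n ∈ ℤ the following anticommutation relations hold in Cl: φ⁺(m)φ⁺(n) + φ⁺(n)φ⁺(m) = 0, φ⁻(m)φ⁻(n) + φ⁻(n)φ⁻(m) = 0, and φ⁺(n)φ⁻(m) + φ⁻(m)φ⁺(n) = n·δ_{n+m,0}·1. -/

import Mathlib

/-!
`Cl` is (an algebra satisfying the defining relations of) the Clifford algebra over `ℂ`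
with generators `Φ i r` for `i ∈ {1,2}` (encoded by `Fin 2`) and half-integers
`r ∈ ℤ + 1/2` (encoded as rationals of the form `a + 1/2`, `a : ℤ`), subject to
`Φ i r * Φ j s + Φ j s * Φ i r = δ_{i,j} δ_{r+s,0}`.
-/

/-- `φ⁻(n) = −(n/√2)·(Φ_1(n−1/2) + √−1·Φ_2(n−1/2))`. -/
noncomputable def phiMinus (Cl : Type*) [Ring Cl] [Algebra ℂ Cl]
    (Φ : Fin 2 → ℚ → Cl) (n : ℤ) : Cl :=
  (-((n : ℂ) / (Real.sqrt 2 : ℂ))) •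
    (Φ 0 ((n : ℚ) - 1/2) + Complex.I • Φ 1 ((n : ℚ) - 1/2))

/-- `φ⁺(n) = −√2·(n·Φ_1(n+1/2) + √−1·(n+1)·Φ_2(n+1/2))`. -/
noncomputable def phiPlus (Cl : Type*) [Ring Cl] [Algebra ℂ Cl]
    (Φ : Fin 2 → ℚ → Cl) (n : ℤ) : Cl :=
  (-(Real.sqrt 2 : ℂ)) •
    ((n : ℂ) • Φ 0 ((n : ℚ) + 1/2) + Complex.I • (((n : ℂ) + 1) • Φ 1 ((n : ℚ) + 1/2)))

/-!
Both `φ⁺(n)` and `φ⁻(m)` are linear combinations of `Φ_1(r), Φ_2(r)` for a single half-integer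
`r`, and on such combinations the anticommutator is the bilinear form `B` times `1`. Each relation
thus reduces to a scalar identity: `{φ⁻(m), φ⁻(n)}` vanishes because `1 + √−1² = 0`, while for
`{φ⁺(m), φ⁺(n)}` (nonzero only if `m + n + 1 = 0`) and `{φ⁺(n), φ⁻(m)}` (only if `n + m = 0`)
the constraint on the indices is what makes the coefficients cancel.
-/

theorem anticomm_smul_add_smul {R A : Type*} [CommRing R] [Ring A] [Algebra R A]
    {x₀ x₁ y₀ y₁ : A} {e₀₀ e₀₁ e₁₀ e₁₁ : R}
    (h₀₀ : x₀ * y₀ + y₀ * x₀ = e₀₀ • 1) (h₀₁ : x₀ * y₁ + y₁ * x₀ = e₀₁ • 1)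
    (h₁₀ : x₁ * y₀ + y₀ * x₁ = e₁₀ • 1) (h₁₁ : x₁ * y₁ + y₁ * x₁ = e₁₁ • 1)
    (c₀ c₁ d₀ d₁ : R) :
    (c₀ • x₀ + c₁ • x₁) * (d₀ • y₀ + d₁ • y₁) + (d₀ • y₀ + d₁ • y₁) * (c₀ • x₀ + c₁ • x₁)
      = (c₀ * d₀ * e₀₀ + c₀ * d₁ * e₀₁ + c₁ * d₀ * e₁₀ + c₁ * d₁ * e₁₁) • 1 := by
  calc _ = (c₀ * d₀) • (x₀ * y₀ + y₀ * x₀) + (c₀ * d₁) • (x₀ * y₁ + y₁ * x₀)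
        + (c₁ * d₀) • (x₁ * y₀ + y₀ * x₁) + (c₁ * d₁) • (x₁ * y₁ + y₁ * x₁) := by
        simp only [mul_add, add_mul, smul_mul_assoc, mul_smul_comm, smul_add, smul_smul]
        module
    _ = _ := by
        rw [h₀₀, h₀₁, h₁₀, h₁₁]
        module

section Generators

variable {Cl : Type*} [Ring Cl] [Algebra ℂ Cl]

def CliffordRelations (Φ : Fin 2 → ℚ → Cl) : Prop :=
  ∀ (i j : Fin 2) (a b : ℤ),
    Φ i ((a : ℚ) + 1/2) * Φ j ((b : ℚ) + 1/2) + Φ j ((b : ℚ) + 1/2) * Φ i ((a : ℚ) + 1/2)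
      = if i = j ∧ ((a : ℚ) + 1/2) + ((b : ℚ) + 1/2) = 0 then 1 else 0

variable {Φ : Fin 2 → ℚ → Cl}

theorem CliffordRelations.anticomm (hΦ : CliffordRelations Φ) (i j : Fin 2) (a b : ℤ) :
    Φ i ((a : ℚ) + 1/2) * Φ j ((b : ℚ) + 1/2) + Φ j ((b : ℚ) + 1/2) * Φ i ((a : ℚ) + 1/2)
      = (if i = j ∧ a + b + 1 = 0 then (1 : ℂ) else 0) • (1 : Cl) := by
  have hsum : ((a : ℚ) + 1/2) + ((b : ℚ) + 1/2) = ((a + b + 1 : ℤ) : ℚ) := by push_cast; ring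
  simp only [hΦ i j a b, hsum, Int.cast_eq_zero]
  split_ifs <;> simp

/-- On combinations of `Φ_1(r), Φ_2(r)` the anticommutator is the bilinear form `B`. -/
theorem CliffordRelations.anticomm_combination (hΦ : CliffordRelations Φ) (a b : ℤ)
    (c₀ c₁ d₀ d₁ : ℂ) :
    (c₀ • Φ 0 ((a : ℚ) + 1/2) + c₁ • Φ 1 ((a : ℚ) + 1/2))
        * (d₀ • Φ 0 ((b : ℚ) + 1/2) + d₁ • Φ 1 ((b : ℚ) + 1/2))
      + (d₀ • Φ 0 ((b : ℚ) + 1/2) + d₁ • Φ 1 ((b : ℚ) + 1/2))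
        * (c₀ • Φ 0 ((a : ℚ) + 1/2) + c₁ • Φ 1 ((a : ℚ) + 1/2))
      = (if a + b + 1 = 0 then c₀ * d₀ + c₁ * d₁ else 0) • (1 : Cl) := by
  rw [anticomm_smul_add_smul (hΦ.anticomm 0 0 a b) (hΦ.anticomm 0 1 a b)
    (hΦ.anticomm 1 0 a b) (hΦ.anticomm 1 1 a b)]
  congr 1
  by_cases h : a + b + 1 = 0 <;> simp [h]

theorem phiPlus_eq (n : ℤ) :
    phiPlus Cl Φ n = (-(Real.sqrt 2 : ℂ) * n) • Φ 0 ((n : ℚ) + 1/2)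
      + (-(Real.sqrt 2 : ℂ) * (Complex.I * (n + 1))) • Φ 1 ((n : ℚ) + 1/2) := by
  simp only [phiPlus, smul_add, smul_smul]

theorem phiMinus_eq (n : ℤ) :
    phiMinus Cl Φ n = (-((n : ℂ) / Real.sqrt 2)) • Φ 0 (((n - 1 : ℤ) : ℚ) + 1/2)
      + (-((n : ℂ) / Real.sqrt 2) * Complex.I) • Φ 1 (((n - 1 : ℤ) : ℚ) + 1/2) := by
  have hindex : ((n - 1 : ℤ) : ℚ) + 1/2 = (n : ℚ) - 1/2 := by push_cast; ring
  simp only [phiMinus, smul_add, smul_smul, hindex]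

theorem CliffordRelations.phiPlus_anticomm_phiPlus (hΦ : CliffordRelations Φ) (m n : ℤ) :
    phiPlus Cl Φ m * phiPlus Cl Φ n + phiPlus Cl Φ n * phiPlus Cl Φ m = 0 := by
  rw [phiPlus_eq, phiPlus_eq, hΦ.anticomm_combination]
  convert zero_smul ℂ (1 : Cl)
  split_ifs with h
  · have hn : (n : ℂ) = -m - 1 := by rw [show n = -m - 1 by omega]; push_cast; ring
    rw [hn]
    linear_combination (-(Real.sqrt 2 : ℂ) ^ 2 * m * (m + 1)) * Complex.I_sq
  · rfl

theorem CliffordRelations.phiMinus_anticomm_phiMinus (hΦ : CliffordRelations Φ) (m n : ℤ) :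
    phiMinus Cl Φ m * phiMinus Cl Φ n + phiMinus Cl Φ n * phiMinus Cl Φ m = 0 := by
  rw [phiMinus_eq, phiMinus_eq, hΦ.anticomm_combination]
  convert zero_smul ℂ (1 : Cl)
  split_ifs
  · linear_combination ((m : ℂ) / Real.sqrt 2 * (n / Real.sqrt 2)) * Complex.I_sq
  · rfl

theorem CliffordRelations.phiPlus_anticomm_phiMinus (hΦ : CliffordRelations Φ) (m n : ℤ) :
    phiPlus Cl Φ n * phiMinus Cl Φ m + phiMinus Cl Φ m * phiPlus Cl Φ n
      = (if n + m = 0 then (n : ℂ) else 0) • (1 : Cl) := by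
  rw [phiPlus_eq, phiMinus_eq, hΦ.anticomm_combination]
  congr 1
  by_cases h : n + m = 0
  · have hm : (m : ℂ) = -n := by rw [show m = -n by omega]; push_cast; ring
    have hsqrt : (Real.sqrt 2 : ℂ) ≠ 0 := by exact_mod_cast (Real.sqrt_pos.2 two_pos).ne'
    rw [if_pos (by omega), if_pos h, hm]
    field_simp
    linear_combination -(n : ℂ) * (n + 1) * Complex.I_sq
  · rw [if_neg (by omega), if_neg h]

end Generators

theorem phi_anticommutation_relations
    (Cl : Type*) [Ring Cl] [Algebra ℂ Cl] (Φ : Fin 2 → ℚ → Cl)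
    (hrel : ∀ (i j : Fin 2) (a b : ℤ),
      Φ i ((a : ℚ) + 1/2) * Φ j ((b : ℚ) + 1/2)
        + Φ j ((b : ℚ) + 1/2) * Φ i ((a : ℚ) + 1/2)
        = if i = j ∧ ((a : ℚ) + 1/2) + ((b : ℚ) + 1/2) = 0 then 1 else 0) :
    ∀ m n : ℤ,
      phiPlus Cl Φ m * phiPlus Cl Φ n + phiPlus Cl Φ n * phiPlus Cl Φ m = 0 ∧
      phiMinus Cl Φ m * phiMinus Cl Φ n + phiMinus Cl Φ n * phiMinus Cl Φ m = 0 ∧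
      phiPlus Cl Φ n * phiMinus Cl Φ m + phiMinus Cl Φ m * phiPlus Cl Φ n
        = (if n + m = 0 then (n : ℂ) else 0) • (1 : Cl) := by
  have hΦ : CliffordRelations Φ := hrel
  exact fun m n => ⟨hΦ.phiPlus_anticomm_phiPlus m n, hΦ.phiMinus_anticomm_phiMinus m n,
    hΦ.phiPlus_anticomm_phiMinus m n⟩
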